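/- Let H be a complex Hilbert space, let (H_n) be an increasing sequence of nonzero closed subspaces of H (H_n ⊆ H_{n+1}) whose union is dense in H, and let T be a bounded linear operator on H. For each n let T_n = P_{H_n} T|_{H_n} be the compression of T to H_n (P_{H_n} the orthogonal projection onto H_n). Then cl W(T) equals the closure of ⋃_n W(T_n); in particular, the Hausdorff distance 𝔡(cl W(T_n), cl W(T)) tends to 0 as n → ∞. -/

import Mathlib

open Metric Filter Topology

/-- The numerical range of a bounded operator: `W(T) = {⟨Tx, x⟩ : ‖x‖ = 1}`
(written with Mathlib's inner product, which is linear in the second variable). -/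
def numericalRange {H : Type*} [NormedAddCommGroup H] [InnerProductSpace ℂ H]
    (T : H →L[ℂ] H) : Set ℂ :=
  {z | ∃ x : H, ‖x‖ = 1 ∧ (inner ℂ x (T x) : ℂ) = z}

/-- The compression `P_K T|_K` of an operator `T` to a (complete, i.e. closed) subspace
`K`, where `P_K` is the orthogonal projection onto `K`. -/
noncomputable def compress {H : Type*} [NormedAddCommGroup H] [InnerProductSpace ℂ H]
    (K : Submodule ℂ H) [K.HasOrthogonalProjection] (T : H →L[ℂ] H) : K →L[ℂ] K :=
  K.orthogonalProjectionOnto.comp (T.comp K.subtypeL)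

/-! The Rayleigh quotient `⟪y, T y⟫ / ‖y‖²` is continuous on `y ≠ 0` and maps `Hₙ \ {0}` into
`W(Tₙ)`, so density of `⋃ Hₙ` puts `W(T)` in the closure of `⋃ W(Tₙ) ⊆ W(T)`.
As `closure W(T)` is compact and the `W(Tₙ)` increase, for each `ε` a single `W(T_N)` has
`closure W(T)` inside its `ε`-thickening, which is Hausdorff convergence. -/

section Hausdorff

variable {α : Type*} [PseudoMetricSpace α]

theorem tendsto_hausdorffDist_of_monotone_of_subset_closure_iUnion {S : ℕ → Set α}
    {A : Set α} (hA : IsCompact A) (hS : Monotone S) (hSA : ∀ n, S n ⊆ A)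
    (hAS : A ⊆ closure (⋃ n, S n)) :
    Tendsto (fun n => hausdorffDist (S n) A) atTop (𝓝 0) := by
  refine Metric.tendsto_atTop.2 fun ε hε => ?_
  have hcover : A ⊆ ⋃ n, thickening (ε / 2) (S n) := by
    rw [← thickening_iUnion]
    exact hAS.trans (closure_subset_thickening (half_pos hε) _)
  obtain ⟨N, hN⟩ := hA.elim_directed_cover _ (fun _ => isOpen_thickening) hcover
    (Monotone.directed_le fun _ _ hmn => thickening_subset_of_subset _ (hS hmn))
  refine ⟨N, fun n hn => ?_⟩
  have hle : hausdorffDist (S n) A ≤ ε / 2 := by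
    refine hausdorffDist_le_of_mem_dist (half_pos hε).le
      (fun x hx => ⟨x, hSA n hx, by simpa using (half_pos hε).le⟩) fun a ha => ?_
    obtain ⟨y, hy, hay⟩ := mem_thickening_iff.1 (hN ha)
    exact ⟨y, hS hn hy, hay.le⟩
  rw [Real.dist_eq, sub_zero, abs_of_nonneg hausdorffDist_nonneg]
  linarith

end Hausdorff

section NumericalRange

variable {H : Type*} [NormedAddCommGroup H] [InnerProductSpace ℂ H]

theorem norm_le_of_mem_numericalRange (T : H →L[ℂ] H) {z : ℂ} (hz : z ∈ numericalRange T) :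
    ‖z‖ ≤ ‖T‖ := by
  obtain ⟨x, hx, rfl⟩ := hz
  calc ‖(inner ℂ x (T x) : ℂ)‖ ≤ ‖x‖ * ‖T x‖ := norm_inner_le_norm x (T x)
    _ ≤ ‖x‖ * (‖T‖ * ‖x‖) := mul_le_mul_of_nonneg_left (T.le_opNorm x) (norm_nonneg x)
    _ = ‖T‖ := by rw [hx]; ring

theorem isCompact_closure_numericalRange (T : H →L[ℂ] H) :
    IsCompact (closure (numericalRange T)) :=
  (isBounded_iff_forall_norm_le.2
    ⟨‖T‖, fun _ => norm_le_of_mem_numericalRange T⟩).isCompact_closure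

theorem numericalRange_compress (K : Submodule ℂ H) [K.HasOrthogonalProjection]
    (T : H →L[ℂ] H) :
    numericalRange (compress K T) =
      {z | ∃ x ∈ K, ‖x‖ = 1 ∧ (inner ℂ x (T x) : ℂ) = z} := by
  have hinner : ∀ x : K, (inner ℂ x (compress K T x) : ℂ) = inner ℂ (x : H) (T x) :=
    fun x => Submodule.inner_orthogonalProjectionOnto_eq_of_mem_left x (T x)
  ext z
  constructor
  · rintro ⟨x, hx, rfl⟩
    exact ⟨x, x.2, by simpa using hx, (hinner x).symm⟩
  · rintro ⟨x, hxK, hx, rfl⟩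
    exact ⟨⟨x, hxK⟩, by simpa using hx, hinner ⟨x, hxK⟩⟩

theorem numericalRange_compress_subset (K : Submodule ℂ H) [K.HasOrthogonalProjection]
    (T : H →L[ℂ] H) : numericalRange (compress K T) ⊆ numericalRange T := by
  rw [numericalRange_compress]
  rintro z ⟨x, -, hx, rfl⟩
  exact ⟨x, hx, rfl⟩

theorem numericalRange_compress_mono {K L : Submodule ℂ H} [K.HasOrthogonalProjection]
    [L.HasOrthogonalProjection] (T : H →L[ℂ] H) (hKL : K ≤ L) :
    numericalRange (compress K T) ⊆ numericalRange (compress L T) := by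
  rw [numericalRange_compress, numericalRange_compress]
  rintro z ⟨x, hxK, hx, rfl⟩
  exact ⟨x, hKL hxK, hx, rfl⟩

theorem inv_normSq_mul_inner_mem_numericalRange_compress {K : Submodule ℂ H}
    [K.HasOrthogonalProjection] (T : H →L[ℂ] H) {x : H} (hxK : x ∈ K) (hx : x ≠ 0) :
    ((‖x‖ : ℂ) ^ 2)⁻¹ * inner ℂ x (T x) ∈ numericalRange (compress K T) := by
  have hx' : (‖x‖ : ℂ) ≠ 0 := by exact_mod_cast norm_ne_zero_iff.2 hx
  rw [numericalRange_compress]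
  refine ⟨(‖x‖ : ℂ)⁻¹ • x, K.smul_mem _ hxK, ?_, ?_⟩
  · rw [norm_smul, norm_inv, Complex.norm_real, norm_norm,
      inv_mul_cancel₀ (norm_ne_zero_iff.2 hx)]
  · simp only [map_smul, inner_smul_left, inner_smul_right, map_inv₀, Complex.conj_ofReal]
    ring

theorem numericalRange_subset_closure_iUnion_compress {ι : Type*} (K : ι → Submodule ℂ H)
    [∀ i, (K i).HasOrthogonalProjection] (hK : Dense (⋃ i, (K i : Set H))) (T : H →L[ℂ] H) :
    numericalRange T ⊆ closure (⋃ i, numericalRange (compress (K i) T)) := by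
  rintro _ ⟨x, hx, rfl⟩
  have hx0 : x ≠ 0 := norm_ne_zero_iff.1 (by rw [hx]; exact one_ne_zero)
  set rayleigh : H → ℂ := fun y => ((‖y‖ : ℂ) ^ 2)⁻¹ * inner ℂ y (T y)
  have hcont : ContinuousAt rayleigh x :=
    (((Complex.continuous_ofReal.comp continuous_norm).pow 2).continuousAt.inv₀
      (by simp [hx])).mul (continuous_id.inner T.continuous).continuousAt
  have : (𝓝[⋃ i, (K i : Set H)] x).NeBot := mem_closure_iff_nhdsWithin_neBot.1 (hK x)
  have hrx : rayleigh x = inner ℂ x (T x) := by simp [rayleigh, hx]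
  rw [← hrx]
  refine mem_closure_of_tendsto (b := 𝓝[⋃ i, (K i : Set H)] x)
    (hcont.tendsto.mono_left nhdsWithin_le_nhds) ?_
  filter_upwards [self_mem_nhdsWithin, nhdsWithin_le_nhds (eventually_ne_nhds hx0)]
    with y hyK hy0
  obtain ⟨i, hyi⟩ := Set.mem_iUnion.1 hyK
  exact Set.mem_iUnion.2 ⟨i, inv_normSq_mul_inner_mem_numericalRange_compress T hyi hy0⟩

end NumericalRange

theorem closure_numericalRange_eq_of_dense_union
    {H : Type*} [NormedAddCommGroup H] [InnerProductSpace ℂ H]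
    (Hn : ℕ → Submodule ℂ H) [∀ n, CompleteSpace (Hn n)]
    (hmono : Monotone Hn) (hdense : Dense (⋃ n, (Hn n : Set H)))
    (T : H →L[ℂ] H) :
    closure (numericalRange T) = closure (⋃ n, numericalRange (compress (Hn n) T)) ∧
      Tendsto
        (fun n => hausdorffDist (closure (numericalRange (compress (Hn n) T)))
          (closure (numericalRange T)))
        atTop (𝓝 0) := by
  have hsub : ∀ n, numericalRange (compress (Hn n) T) ⊆ numericalRange T := fun n =>
    numericalRange_compress_subset (Hn n) T
  have hclosure : closure (numericalRange T) =
      closure (⋃ n, numericalRange (compress (Hn n) T)) :=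
    (closure_minimal (numericalRange_subset_closure_iUnion_compress Hn hdense T)
      isClosed_closure).antisymm (closure_mono (Set.iUnion_subset hsub))
  refine ⟨hclosure, ?_⟩
  simp only [hausdorffDist_closure₁]
  exact tendsto_hausdorffDist_of_monotone_of_subset_closure_iUnion
    (isCompact_closure_numericalRange T)
    (fun m n hmn => numericalRange_compress_mono T (hmono hmn))
    (fun n => (hsub n).trans subset_closure) hclosure.subset
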